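/- Fix a field k and n ∈ ℕ. Every short exact sequence 0 → B^n → E → B^n → 0 of k[I]-modules in which E is smooth splits; that is, if a smooth k[I]-module E has a submodule N isomorphic to B^n with E/N isomorphic to B^n, then N is a direct summand of E as a k[I]-module. -/

import Mathlib

open scoped Classical

noncomputable section

/-- The increasing monoid `I`: the submonoid of `Function.End ℕ+` (functions under
composition) consisting of strictly increasing functions `σ : ℕ+ → ℕ+` such that
`σ n = n + ℓ` for some `ℓ` and all sufficiently large `n`. -/
def IncMonoid : Submonoid (Function.End ℕ+) where
  carrier := {f | StrictMono f ∧ ∃ (l : ℕ) (N : ℕ+), ∀ n : ℕ+, N ≤ n → ((f n : ℕ) = (n : ℕ) + l)}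
  one_mem' := ⟨fun _ _ h => h, 0, 1, fun n _ => by show ((n : ℕ+) : ℕ) = (n : ℕ) + 0; omega⟩
  mul_mem' := by
    rintro f g ⟨hf1, lf, Nf, hf2⟩ ⟨hg1, lg, Ng, hg2⟩
    refine ⟨hf1.comp hg1, lg + lf, max Nf Ng, fun n hn => ?_⟩
    have h1 : (g n : ℕ) = (n : ℕ) + lg := hg2 n (le_trans (le_max_right _ _) hn)
    have h2 : Nf ≤ g n := by
      rw [← PNat.coe_le_coe, h1]
      have : (Nf : ℕ) ≤ (n : ℕ) := (PNat.coe_le_coe _ _).2 (le_trans (le_max_left _ _) hn)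
      omega
    have h3 := hf2 (g n) h2
    show ((f (g n) : ℕ)) = (n : ℕ) + (lg + lf)
    omega

/-- The increasing monoid, as a type. -/
abbrev IncM : Type := IncMonoid

theorem IncM.strictMono (σ : IncM) : StrictMono σ.1 := σ.2.1

theorem IncM.le_apply (σ : IncM) (n : ℕ+) : n ≤ σ.1 n := by
  induction n using PNat.recOn with
  | one => exact (σ.1 1).one_le
  | succ n ih =>
      have h2 : σ.1 n < σ.1 (n + 1) := σ.strictMono (by rw [← PNat.coe_lt_coe]; push_cast; omega)
      rw [← PNat.coe_le_coe] at *
      rw [← PNat.coe_lt_coe] at h2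
      push_cast at *
      omega

/-- The underlying function of the generator `α_k`. -/
def alphaFun (k : ℕ+) : Function.End ℕ+ := fun n => if n < k then n else n + 1

theorem alphaFun_strictMono (k : ℕ+) : StrictMono (alphaFun k) := by
  intro a b hab
  unfold alphaFun
  split_ifs with h1 h2 <;>
    rw [← PNat.coe_lt_coe] at * <;> push_cast at * <;> omega

theorem alphaFun_mem (k : ℕ+) : alphaFun k ∈ IncMonoid := by
  refine ⟨alphaFun_strictMono k, 1, k, fun n hn => ?_⟩
  unfold alphaFun
  rw [if_neg (not_lt.2 hn)]
  push_cast
  ring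

/-- The generator `α_k` of the increasing monoid (`k ≥ 1`). -/
def alpha (k : ℕ+) : IncM := ⟨alphaFun k, alphaFun_mem k⟩

/-- The submonoid `I_{≥ n}` of `I` generated by the `α_i` with `i ≥ n`. -/
def Iges (n : ℕ+) : Submonoid IncM := Submonoid.closure (alpha '' Set.Ici n)

/-- The submonoid `I_{> n}` of `I` generated by the `α_i` with `i > n`. -/
def Igt (n : ℕ) : Submonoid IncM := Submonoid.closure {s | ∃ i : ℕ+, n < (i : ℕ) ∧ s = alpha i}

/-- The monoid algebra `k[I]` of the increasing monoid. -/
abbrev IncAlg (k : Type*) [Field k] : Type _ := MonoidAlgebra k IncM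

/-- The image of `σ ∈ I` in the monoid algebra `k[I]`. -/
abbrev ofInc (k : Type*) [Field k] (σ : IncM) : IncAlg k := MonoidAlgebra.of k IncM σ

/-- A `k[I]`-module is smooth if every vector is fixed by some `I_{>n}`. -/
def IsSmoothMod (k : Type*) [Field k] (M : Type*) [AddCommMonoid M]
    [Module (IncAlg k) M] : Prop :=
  ∀ x : M, ∃ n : ℕ, ∀ σ ∈ Igt n, ofInc k σ • x = x

/-! ### The principal modules `A^r` -/

/-- Index set for the basis of the principal module `A^r`:
strictly increasing `r`-tuples of positive integers. -/
def Idx (r : ℕ) : Type := {v : Fin r → ℕ+ // StrictMono v}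

/-- The action of `σ ∈ I` on the index set of `A^r`. -/
def idxAct {r : ℕ} (σ : IncM) (t : Idx r) : Idx r :=
  ⟨σ.1 ∘ t.1, (IncM.strictMono σ).comp t.2⟩

/-- The representation of the increasing monoid on the principal module `A^r`. -/
def prinRep (k : Type*) [Field k] (r : ℕ) : Representation k IncM (Idx r →₀ k) where
  toFun σ := Finsupp.lmapDomain k k (idxAct σ)
  map_one' := LinearMap.ext fun v => by
    have h : (idxAct (1 : IncM) : Idx r → Idx r) = id := funext fun t => rfl
    simp [Finsupp.lmapDomain_apply, h, Finsupp.mapDomain_id]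
  map_mul' := fun σ τ => LinearMap.ext fun v => by
    have h : (idxAct (σ * τ) : Idx r → Idx r) = (idxAct σ) ∘ (idxAct τ) :=
      funext fun t => rfl
    show Finsupp.lmapDomain k k (idxAct (σ * τ)) v =
      Finsupp.lmapDomain k k (idxAct σ) (Finsupp.lmapDomain k k (idxAct τ) v)
    simp [Finsupp.lmapDomain_apply, h, Finsupp.mapDomain_comp]

/-- The principal module `A^r`, as a module over the monoid algebra `k[I]`. -/
abbrev PrinMod (k : Type*) [Field k] (r : ℕ) : Type _ := (prinRep k r).asModule

/-- The basis vector `e_t` of the principal module `A^r`. -/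
def ePrin (k : Type*) [Field k] {r : ℕ} (t : Idx r) : PrinMod k r :=
  (prinRep k r).asModuleEquiv.symm (Finsupp.single t 1)

/-- The tuple `(1, 2, …, r)` indexing the canonical generator `e_{1,…,r}` of `A^r`. -/
def iotaIdx (r : ℕ) : Idx r :=
  ⟨fun i => ⟨(i : ℕ) + 1, Nat.succ_pos _⟩, fun a b h => by
    exact (PNat.coe_lt_coe _ _).1 (Nat.succ_lt_succ h)⟩

/-! ### The simple modules `B^n` -/

/-- `σ ∈ I` fixes the natural number `n`, with the convention `σ 0 = 0`. -/
def fixesNat (σ : IncM) (n : ℕ) : Prop := ∀ h : 0 < n, σ.1 ⟨n, h⟩ = ⟨n, h⟩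

theorem fixesNat_mul (σ τ : IncM) (n : ℕ) :
    fixesNat (σ * τ) n ↔ fixesNat σ n ∧ fixesNat τ n := by
  rcases Nat.eq_zero_or_pos n with h0 | h0
  · subst h0
    constructor
    · exact fun _ => ⟨fun h => absurd h (lt_irrefl 0), fun h => absurd h (lt_irrefl 0)⟩
    · exact fun _ h => absurd h (lt_irrefl 0)
  · set p : ℕ+ := ⟨n, h0⟩
    have happ : ∀ h : 0 < n, (σ * τ).1 ⟨n, h⟩ = σ.1 (τ.1 ⟨n, h⟩) := fun _ => rfl
    constructor
    · intro h
      have hfix : σ.1 (τ.1 p) = p := h h0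
      have h1 : p ≤ τ.1 p := τ.le_apply p
      have h2 : τ.1 p ≤ σ.1 (τ.1 p) := σ.le_apply _
      have hτp : τ.1 p = p := le_antisymm (h2.trans_eq hfix) h1
      have hσp : σ.1 p = p := by rw [hτp] at hfix; exact hfix
      exact ⟨fun _ => hσp, fun _ => hτp⟩
    · rintro ⟨hσ, hτ⟩ h
      rw [happ h]
      have := hτ h0
      rw [this, hσ h0]

/-- The representation of the increasing monoid on the simple module `B^n`:
`σ` acts by the identity if `σ(n) = n` (with `σ(0) = 0`) and by `0` otherwise. -/
def bRep (k : Type*) [Field k] (n : ℕ) : Representation k IncM k where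
  toFun σ := if fixesNat σ n then 1 else 0
  map_one' := by
    try dsimp only
    rw [if_pos]
    intro h
    rfl
  map_mul' := fun σ τ => by
    try dsimp only
    by_cases hσ : fixesNat σ n
    · by_cases hτ : fixesNat τ n
      · rw [if_pos ((fixesNat_mul σ τ n).2 ⟨hσ, hτ⟩), if_pos hσ, if_pos hτ, one_mul]
      · rw [if_neg (fun h => hτ ((fixesNat_mul σ τ n).1 h).2), if_pos hσ, if_neg hτ, one_mul]
    · by_cases hτ : fixesNat τ n
      · rw [if_neg (fun h => hσ ((fixesNat_mul σ τ n).1 h).1), if_neg hσ, if_pos hτ, mul_one]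
      · rw [if_neg (fun h => hσ ((fixesNat_mul σ τ n).1 h).1), if_neg hσ, if_neg hτ, mul_zero]

/-- The simple module `B^n`, as a module over the monoid algebra `k[I]`. -/
abbrev BMod (k : Type*) [Field k] (n : ℕ) : Type _ := (bRep k n).asModule

/-!
Pick `y` spanning `N` and `x` lifting a generator of `E/N`. Both lines carry the character
`χ σ = if σ fixes n then 1 else 0`, so `σ • x = χ σ • x + c σ • y`, where
`c (σ τ) = χ τ * c σ + χ σ * c τ`. The `α_i` generate `I`, and their relations
`α_i α_j = α_{j+1} α_i` (`i ≤ j`) force `c α_i = 0` for `i ≤ n` and make `c α_j` constant for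
`j > n`. Smoothness makes `x` fixed by `α_j` for large `j`, so this constant is `0` as well.
Hence `c = 0`: `x` is an eigenvector, and the line it spans is a complement of `N`.
-/

section CharacterExtension

open MonoidAlgebra

variable {k G : Type*} [Field k] [Monoid G]

/-- The derivations for `χ` classify the self-extensions of the character `χ`. -/
def IsCharDerivation (χ : G →* k) (c : G → k) : Prop :=
  ∀ g h, c (g * h) = χ h * c g + χ g * c h

variable {χ : G →* k}

theorem IsCharDerivation.map_one {c : G → k} (hc : IsCharDerivation χ c) : c 1 = 0 := by
  simpa using hc 1 1

variable {E : Type*} [AddCommGroup E] [Module k E] [Module (MonoidAlgebra k G) E]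
  [IsScalarTower k (MonoidAlgebra k G) E]

theorem of_smul_eq_smul_of_linearEquiv {M : Type*} [AddCommGroup M] [Module k M]
    [Module (MonoidAlgebra k G) M] [IsScalarTower k (MonoidAlgebra k G) M]
    (e : E ≃ₗ[MonoidAlgebra k G] M) (h : ∀ (g : G) (v : M), of k G g • v = χ g • v)
    (g : G) (z : E) : of k G g • z = χ g • z :=
  e.injective (by rw [map_smul, h, LinearMapClass.map_smul_of_tower])

theorem smul_eq_lift_smul {x : E} (hx : ∀ g, of k G g • x = χ g • x) (r : MonoidAlgebra k G) :
    r • x = lift k k G χ r • x := by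
  induction r using MonoidAlgebra.induction_on with
  | of g => rw [lift_of, hx]
  | add f g hf hg => rw [add_smul, hf, hg, map_add, add_smul]
  | smul a f hf => rw [smul_assoc, hf, map_smul, smul_smul, smul_eq_mul]

theorem exists_isCharDerivation_of_finrank_eq_one {N : Submodule (MonoidAlgebra k G) E}
    (hN : Module.finrank k N = 1) (hNχ : ∀ (g : G) (z : N), of k G g • z = χ g • z)
    {x : E} (hx : ∀ g, of k G g • N.mkQ x = χ g • N.mkQ x) :
    ∃ y : E, y ≠ 0 ∧ ∃ c : G → k, IsCharDerivation χ c ∧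
      ∀ g, of k G g • x = χ g • x + c g • y := by
  obtain ⟨y, hy0, hyN⟩ := finrank_eq_one_iff'.1 hN
  have hy : ∀ g, of k G g • (y : E) = χ g • (y : E) := fun g => congrArg Subtype.val (hNχ g y)
  have hdefect : ∀ g, ∃ a : k, of k G g • x = χ g • x + a • (y : E) := by
    intro g
    have hmem : of k G g • x - χ g • x ∈ N := by
      rw [← Submodule.Quotient.mk_eq_zero, ← Submodule.mkQ_apply, map_sub, map_smul,
        LinearMapClass.map_smul_of_tower, hx, sub_self]
    obtain ⟨a, ha⟩ := hyN ⟨_, hmem⟩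
    exact ⟨a, eq_add_of_sub_eq' (congrArg Subtype.val ha).symm⟩
  choose c hc using hdefect
  have hyE : (y : E) ≠ 0 := by simpa using hy0
  refine ⟨y, hyE, c, fun g h => smul_left_injective k hyE ?_, hc⟩
  have hgh := hc (g * h)
  rw [map_mul, mul_smul, hc h, smul_add, smul_comm, hc g, smul_comm, hy, map_mul] at hgh
  dsimp only
  linear_combination (norm := module) -hgh

theorem isCompl_span_singleton_of_eigenvector {N : Submodule (MonoidAlgebra k G) E}
    (hQ : Module.finrank k (E ⧸ N) = 1) {x : E} (hxN : x ∉ N)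
    (hx : ∀ g, of k G g • x = χ g • x) :
    IsCompl N (Submodule.span (MonoidAlgebra k G) {x}) := by
  have hx0 : N.mkQ x ≠ 0 := by rwa [Ne, Submodule.mkQ_apply, Submodule.Quotient.mk_eq_zero]
  constructor
  · rw [Submodule.disjoint_def]
    intro z hzN hz
    obtain ⟨r, rfl⟩ := Submodule.mem_span_singleton.1 hz
    rw [smul_eq_lift_smul hx] at hzN ⊢
    by_contra hr
    have hxN' := N.smul_of_tower_mem (lift k k G χ r)⁻¹ hzN
    rw [smul_smul, inv_mul_cancel₀ (left_ne_zero_of_smul hr), one_smul] at hxN'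
    exact hxN hxN'
  · rw [codisjoint_iff, Submodule.eq_top_iff']
    intro z
    obtain ⟨a, ha⟩ := (finrank_eq_one_iff_of_nonzero' _ hx0).1 hQ (N.mkQ z)
    have hmem : z - a • x ∈ N := by
      rw [← Submodule.Quotient.mk_eq_zero, ← Submodule.mkQ_apply, map_sub,
        LinearMapClass.map_smul_of_tower, ha, sub_self]
    simpa using Submodule.add_mem_sup hmem
      (Submodule.smul_of_tower_mem _ a (Submodule.mem_span_singleton_self x))

end CharacterExtension

theorem PNat.eventually_lt_coe (m : ℕ) : ∀ᶠ j : ℕ+ in Filter.atTop, m < (j : ℕ) :=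
  Filter.eventually_atTop.2 ⟨m.succPNat, fun _ hj => (PNat.coe_le_coe _ _).2 hj⟩

theorem coe_alpha_apply (i m : ℕ+) :
    ((alpha i).1 m : ℕ) = if (m : ℕ) < i then (m : ℕ) else m + 1 := by
  change ((alphaFun i m : ℕ+) : ℕ) = _
  unfold alphaFun
  split_ifs <;> simp_all [← PNat.coe_lt_coe]

theorem alpha_mul_alpha_of_le {i j : ℕ+} (hij : i ≤ j) :
    alpha i * alpha j = alpha (j + 1) * alpha i := by
  refine Subtype.ext (funext fun m => PNat.coe_injective ?_)
  change ((alpha i).1 ((alpha j).1 m) : ℕ) = (alpha (j + 1)).1 ((alpha i).1 m)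
  rw [← PNat.coe_le_coe] at hij
  simp only [coe_alpha_apply, PNat.add_coe, PNat.one_coe]
  split_ifs <;> omega

/-- The left inverse of `α_i` that merges `i` and `i + 1`. -/
def collapseAt (i p : ℕ+) : ℕ+ :=
  ⟨if (p : ℕ) ≤ i then p else p - 1, by have := i.pos; have := p.pos; split_ifs <;> omega⟩

theorem coe_collapseAt (i p : ℕ+) :
    (collapseAt i p : ℕ) = if (p : ℕ) ≤ i then (p : ℕ) else p - 1 := rfl

theorem alphaFun_collapseAt {i p : ℕ+} (hp : p ≠ i) : alphaFun i (collapseAt i p) = p := by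
  apply PNat.coe_injective
  rw [← PNat.coe_injective.ne_iff] at hp
  change ((alpha i).1 (collapseAt i p) : ℕ) = p
  rw [coe_alpha_apply, coe_collapseAt]
  split_ifs <;> omega

theorem StrictMono.collapseAt_comp {f : ℕ+ → ℕ+} (hf : StrictMono f) {i : ℕ+}
    (hi : i ∉ Set.range f) : StrictMono (collapseAt i ∘ f) := by
  intro a b hab
  have hfab : (f a : ℕ) < f b := hf hab
  have hfa : (f a : ℕ) ≠ i := fun h => hi ⟨a, PNat.coe_injective h⟩
  rw [← PNat.coe_lt_coe, Function.comp_apply, Function.comp_apply, coe_collapseAt, coe_collapseAt]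
  split_ifs <;> omega

/-- The least point moved by `σ` is not a value of `σ`. -/
theorem IncM.exists_not_mem_range {σ : IncM} (hσ : σ ≠ 1) : ∃ i, i ∉ Set.range σ.1 := by
  obtain ⟨p, hp⟩ : ∃ p, σ.1 p ≠ p := by
    by_contra! h
    exact hσ (Subtype.ext (funext h))
  obtain ⟨i, hi, hmin⟩ := wellFounded_lt.has_min {p | σ.1 p ≠ p} ⟨p, hp⟩
  refine ⟨i, ?_⟩
  rintro ⟨m, hm⟩
  rcases lt_trichotomy m i with hmi | rfl | him
  · exact hmin m (by simpa [hm] using hmi.ne') hmi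
  · exact hi hm
  · exact (σ.le_apply i).not_gt ((σ.strictMono him).trans_eq hm)

theorem IncM.coe_collapseAt_apply_add_one {σ : IncM} {i m : ℕ+} (hi : i ∉ Set.range σ.1)
    (him : i ≤ m) : (collapseAt i (σ.1 m) : ℕ) + 1 = σ.1 m := by
  have hσm : (i : ℕ) ≤ σ.1 m := him.trans (σ.le_apply m)
  have hσi : (σ.1 m : ℕ) ≠ i := fun h => hi ⟨m, PNat.coe_injective h⟩
  rw [coe_collapseAt]
  split_ifs <;> omega

/-- For a value `i` missed by `σ`, `σ = α_i ∘ (collapseAt i ∘ σ)` and the second factor has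
eventual shift one less. -/
theorem IncM.exists_eq_alpha_mul {σ : IncM} (hσ : σ ≠ 1) {l : ℕ} {N : ℕ+}
    (hN : ∀ m, N ≤ m → (σ.1 m : ℕ) = m + l) :
    ∃ l', l = l' + 1 ∧ ∃ (i : ℕ+) (τ : IncM) (N' : ℕ+),
      σ = alpha i * τ ∧ ∀ m, N' ≤ m → (τ.1 m : ℕ) = m + l' := by
  obtain ⟨i, hi⟩ := σ.exists_not_mem_range hσ
  have hmono := σ.strictMono.collapseAt_comp hi
  have hshift : ∀ m, max N i ≤ m → (collapseAt i (σ.1 m) : ℕ) + 1 = m + l := fun m hm =>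
    (σ.coe_collapseAt_apply_add_one hi (le_of_max_le_right hm)).trans (hN m (le_of_max_le_left hm))
  obtain ⟨l', rfl⟩ : ∃ l', l = l' + 1 := by
    have h := hmono.le_apply (x := max N i)
    have := hshift _ le_rfl
    change max N i ≤ collapseAt i (σ.1 (max N i)) at h
    rw [← PNat.coe_le_coe] at h
    exact Nat.exists_eq_add_one.2 (by omega)
  have hτ : ∀ m, max N i ≤ m → (collapseAt i (σ.1 m) : ℕ) = m + l' := fun m hm => by
    have := hshift m hm
    omega
  exact ⟨l', rfl, i, ⟨_, hmono, l', max N i, hτ⟩, max N i,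
    Subtype.ext (funext fun m => (alphaFun_collapseAt fun h => hi ⟨m, h⟩).symm), hτ⟩

theorem IncM.mem_closure_range_alpha (σ : IncM) : σ ∈ Submonoid.closure (Set.range alpha) := by
  obtain ⟨-, l, N, hN⟩ := σ.2
  induction l using Nat.strong_induction_on generalizing σ N with
  | _ l ih =>
    by_cases hσ : σ = 1
    · exact hσ ▸ one_mem _
    obtain ⟨l', rfl, i, τ, N', rfl, hτ⟩ := σ.exists_eq_alpha_mul hσ hN
    exact mul_mem (Submonoid.subset_closure ⟨i, rfl⟩) (ih l' l'.lt_succ_self τ N' hτ)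

def bChar (k : Type*) [Field k] (n : ℕ) : IncM →* k where
  toFun σ := if fixesNat σ n then 1 else 0
  map_one' := if_pos fun _ => rfl
  map_mul' σ τ := by
    simp only [fixesNat_mul]
    split_ifs <;> simp_all

theorem fixesNat_alpha_iff {i : ℕ+} {n : ℕ} : fixesNat (alpha i) n ↔ n < i := by
  refine ⟨fun h => ?_, fun h hn => PNat.coe_injective ?_⟩
  · by_contra! hin
    have hfix := congrArg PNat.val (h (i.pos.trans_le hin))
    have hmove := coe_alpha_apply i ⟨n, i.pos.trans_le hin⟩
    rw [PNat.mk_coe, if_neg hin.not_gt] at hmove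
    rw [PNat.mk_coe] at hfix
    omega
  · have hfix := coe_alpha_apply i ⟨n, hn⟩
    rwa [PNat.mk_coe, if_pos h] at hfix

theorem bChar_alpha_of_lt (k : Type*) [Field k] {n : ℕ} {i : ℕ+} (h : n < i) :
    bChar k n (alpha i) = 1 :=
  if_pos (fixesNat_alpha_iff.2 h)

theorem bChar_alpha_of_le (k : Type*) [Field k] {n : ℕ} {i : ℕ+} (h : (i : ℕ) ≤ n) :
    bChar k n (alpha i) = 0 :=
  if_neg (fun hfix => h.not_gt (fixesNat_alpha_iff.1 hfix))

section BCharDerivation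

variable {k : Type*} [Field k] {n : ℕ} {c : IncM → k}

theorem IsCharDerivation.alpha_succ (hc : IsCharDerivation (bChar k n) c) {j : ℕ+} (hj : n < j) :
    c (alpha (j + 1)) = c (alpha j) := by
  have h := congrArg c (alpha_mul_alpha_of_le (le_refl j))
  rw [hc, hc, bChar_alpha_of_lt k hj, bChar_alpha_of_lt k (by rw [PNat.add_coe]; omega)] at h
  linear_combination -h

theorem IsCharDerivation.alpha_of_le (hc : IsCharDerivation (bChar k n) c) {i : ℕ+}
    (hi : (i : ℕ) ≤ n) : c (alpha i) = 0 := by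
  set m : ℕ+ := ⟨n, i.pos.trans_le hi⟩
  have h := congrArg c (alpha_mul_alpha_of_le (show i ≤ m from hi))
  rw [hc, hc, bChar_alpha_of_le k hi, bChar_alpha_of_le k (n := n) (i := m) le_rfl,
    bChar_alpha_of_lt k (by rw [PNat.add_coe]; exact lt_add_one n)] at h
  linear_combination -h

theorem IsCharDerivation.eq_zero (hc : IsCharDerivation (bChar k n) c)
    (hlarge : ∀ᶠ j in Filter.atTop, c (alpha j) = 0) : c = 0 := by
  obtain ⟨J, hJ⟩ := Filter.eventually_atTop.1 hlarge
  have hshift : ∀ j : ℕ+, n < j → ∀ d : ℕ+, c (alpha (j + d)) = c (alpha j) := by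
    intro j hj d
    induction d using PNat.recOn with
    | one => exact hc.alpha_succ hj
    | succ d ih => rw [← add_assoc, hc.alpha_succ (by rw [PNat.add_coe]; omega), ih]
  have halpha : ∀ i, c (alpha i) = 0 := by
    intro i
    rcases le_or_gt (i : ℕ) n with hi | hi
    · exact hc.alpha_of_le hi
    · rw [← hshift i hi J, hJ _ (PNat.lt_add_left J i).le]
  funext σ
  refine Submonoid.closure_induction (motive := fun σ _ => c σ = 0) ?_ hc.map_one ?_
    σ.mem_closure_range_alpha
  · rintro _ ⟨i, rfl⟩
    exact halpha i
  · intro σ τ _ _ hσ hτ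
    rw [hc, hσ, hτ, mul_zero, mul_zero, add_zero]

end BCharDerivation

theorem IsSmoothMod.eventually_alpha_smul_eq {k : Type*} [Field k] {M : Type*} [AddCommMonoid M]
    [Module (IncAlg k) M] (hM : IsSmoothMod k M) (x : M) :
    ∀ᶠ j in Filter.atTop, ofInc k (alpha j) • x = x := by
  obtain ⟨m, hm⟩ := hM x
  exact (PNat.eventually_lt_coe m).mono fun j hj => hm _ (Submonoid.subset_closure ⟨j, hj, rfl⟩)

theorem BMod.ofInc_smul (k : Type*) [Field k] (n : ℕ) (σ : IncM) (v : BMod k n) :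
    ofInc k σ • v = bChar k n σ • v := by
  apply (bRep k n).asModuleEquiv.injective
  rw [Representation.asModuleEquiv_map_smul, Representation.asAlgebraHom_of, map_smul]
  change (if fixesNat σ n then 1 else 0 : k →ₗ[k] k) _ =
    (if fixesNat σ n then 1 else 0 : k) • _
  split_ifs <;> simp

theorem BMod.finrank_eq_one (k : Type*) [Field k] (n : ℕ) : Module.finrank k (BMod k n) = 1 :=
  (bRep k n).asModuleEquiv.finrank_eq.trans (Module.finrank_self k)

/-- Every smooth self-extension of `B^n` splits: if a smooth
`k[I]`-module `E` has a submodule `N ≅ B^n` with `E/N ≅ B^n`, then `N` is a direct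
summand of `E`. -/
theorem smooth_self_extension_splits (k : Type*) [Field k] (n : ℕ)
    (E : Type*) [AddCommGroup E] [Module (IncAlg k) E] (hE : IsSmoothMod k E)
    (N : Submodule (IncAlg k) E)
    (h1 : Nonempty (N ≃ₗ[IncAlg k] BMod k n))
    (h2 : Nonempty ((E ⧸ N) ≃ₗ[IncAlg k] BMod k n)) :
    ∃ C : Submodule (IncAlg k) E, IsCompl N C := by
  let _ : Module k E := Module.compHom E (algebraMap k (IncAlg k))
  have : IsScalarTower k (IncAlg k) E := IsScalarTower.of_algebraMap_smul fun _ _ => rfl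
  obtain ⟨φ⟩ := h1
  obtain ⟨ψ⟩ := h2
  have hQ : Module.finrank k (E ⧸ N) = 1 :=
    (ψ.restrictScalars k).finrank_eq.trans (BMod.finrank_eq_one k n)
  obtain ⟨q, hq0, -⟩ := finrank_eq_one_iff'.1 hQ
  obtain ⟨x, rfl⟩ := N.mkQ_surjective q
  obtain ⟨y, hy0, c, hc, hcx⟩ := exists_isCharDerivation_of_finrank_eq_one
    ((φ.restrictScalars k).finrank_eq.trans (BMod.finrank_eq_one k n))
    (of_smul_eq_smul_of_linearEquiv φ (BMod.ofInc_smul k n))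
    (of_smul_eq_smul_of_linearEquiv ψ (BMod.ofInc_smul k n) · _)
  have hc0 : c = 0 := hc.eq_zero <| by
    filter_upwards [hE.eventually_alpha_smul_eq x, (PNat.eventually_lt_coe n).mono
      fun _ hj => bChar_alpha_of_lt k hj] with j hjx hjχ
    have h := hcx (alpha j)
    rwa [hjx, hjχ, one_smul, left_eq_add, smul_eq_zero, or_iff_left hy0] at h
  refine ⟨_, isCompl_span_singleton_of_eigenvector hQ ?_ fun g => by simpa [hc0] using hcx g⟩
  rwa [Ne, Submodule.mkQ_apply, Submodule.Quotient.mk_eq_zero] at hq0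

end
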